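/- A semigroup S is completely inverse if and only if S is an inverse semigroup and Green's relation H is a congruence on S (i.e. a H b implies ca H cb and ac H bc for all c ∈ S). -/
import Mathlib


variable {S : Type*} [Semigroup S]

/-- Green's preorder `≤_L`: `a ∈ S¹ b`. -/
def leL (a b : S) : Prop := a = b ∨ ∃ x : S, a = x * b
/-- Green's preorder `≤_R`: `a ∈ b S¹`. -/
def leR (a b : S) : Prop := a = b ∨ ∃ x : S, a = b * x
/-- Green's preorder `≤_H`. -/
def leH (a b : S) : Prop := leL a b ∧ leR a b
/-- Green's relation `L`. -/
def grL (a b : S) : Prop := leL a b ∧ leL b a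
/-- Green's relation `R`. -/
def grR (a b : S) : Prop := leR a b ∧ leR b a
/-- Green's relation `H`. -/
def grH (a b : S) : Prop := leH a b ∧ leH b a
/-- `x` is the group inverse of `a`. -/
def IsGrpInv (a x : S) : Prop := a * x = x * a ∧ a * x * a = a ∧ x * a * x = x
/-- `a` is group invertible. -/
def GrpInvertible (a : S) : Prop := ∃ x : S, IsGrpInv a x
/-- `x ∈ V(a)[H]`: inverse of `a` modulo `H`. -/
def VH (a x : S) : Prop := grH (a * x * a) a ∧ grH (x * a * x) x
/-- `x ∈ A(a)[H]`: associate of `a` modulo `H`. -/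
def AH (a x : S) : Prop := grH (a * x * a) a
/-- `x ∈ V(a)`: reflexive inverse of `a`. -/
def refInv (a x : S) : Prop := a * x * a = a ∧ x * a * x = x
/-- The `H`-class of `a`. -/
def Hclass (a : S) : Set S := {b : S | grH b a}

lemma pam {p q r : S} (h : p * q = r) (z : S) : p * (q * z) = r * z := by
  rw [← mul_assoc, h]

lemma comm_ext {p q : S} (h : p * q = q * p) (z : S) : p * (q * z) = q * (p * z) := by
  rw [← mul_assoc, h, mul_assoc]

lemma leL_trans {a b c : S} (h1 : leL a b) (h2 : leL b c) : leL a c := by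
  rcases h1 with rfl | ⟨x, rfl⟩
  · exact h2
  · rcases h2 with rfl | ⟨y, rfl⟩
    · exact Or.inr ⟨x, rfl⟩
    · exact Or.inr ⟨x * y, (mul_assoc ..).symm⟩

lemma leR_trans {a b c : S} (h1 : leR a b) (h2 : leR b c) : leR a c := by
  rcases h1 with rfl | ⟨x, rfl⟩
  · exact h2
  · rcases h2 with rfl | ⟨y, rfl⟩
    · exact Or.inr ⟨x, rfl⟩
    · exact Or.inr ⟨y * x, mul_assoc ..⟩

lemma grH_symm {a b : S} (h : grH a b) : grH b a := ⟨h.2, h.1⟩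

lemma grH_trans {a b c : S} (h1 : grH a b) (h2 : grH b c) : grH a c :=
  ⟨⟨leL_trans h1.1.1 h2.1.1, leR_trans h1.1.2 h2.1.2⟩,
   ⟨leL_trans h2.2.1 h1.2.1, leR_trans h2.2.2 h1.2.2⟩⟩

lemma leL_mulr {a b : S} (c : S) (h : leL a b) : leL (a * c) (b * c) := by
  rcases h with rfl | ⟨x, rfl⟩
  · exact Or.inl rfl
  · exact Or.inr ⟨x, mul_assoc ..⟩

lemma leR_mull {a b : S} (c : S) (h : leR a b) : leR (c * a) (c * b) := by
  rcases h with rfl | ⟨x, rfl⟩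
  · exact Or.inl rfl
  · exact Or.inr ⟨x, (mul_assoc ..).symm⟩
lemma idem_comm (hcomm : ∀ a b : S, GrpInvertible a → GrpInvertible b → grH (a * b) (b * a))
    {e f : S} (he : e * e = e) (hf : f * f = f) : e * f = f * e := by
  have hge : GrpInvertible e := ⟨e, rfl, by rw [he, he], by rw [he, he]⟩
  have hgf : GrpInvertible f := ⟨f, rfl, by rw [hf, hf], by rw [hf, hf]⟩
  have hg := hcomm e f hge hgf
  have h1 : e * f * e = e * f := by
    rcases hg.1.1 with h | ⟨x, h⟩
    · rw [h, mul_assoc, he]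
    · rw [h, mul_assoc x, mul_assoc f, he]
  have h2 : e * (f * e) = f * e := by
    rcases hg.2.2 with h | ⟨z, h⟩
    · rw [h, ← mul_assoc, he]
    · rw [h, ← mul_assoc, ← mul_assoc, he]
  calc e * f = e * f * e := h1.symm
    _ = e * (f * e) := mul_assoc ..
    _ = f * e := h2

lemma uniq_refInv (hic : ∀ e f : S, e * e = e → f * f = f → e * f = f * e)
    (a x y : S) (hx : refInv a x) (hy : refInv a y) : x = y := by
  obtain ⟨hx1, hx2⟩ := hx
  obtain ⟨hy1, hy2⟩ := hy
  -- normalized forms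
  have hx1' : a * (x * a) = a := by rw [← mul_assoc]; exact hx1
  have hy1' : a * (y * a) = a := by rw [← mul_assoc]; exact hy1
  have hx2' : x * (a * x) = x := by rw [← mul_assoc]; exact hx2
  have hy2' : y * (a * y) = y := by rw [← mul_assoc]; exact hy2
  -- idempotents
  have hax : (a * x) * (a * x) = a * x := by rw [← mul_assoc, mul_assoc a x a, hx1']
  have hay : (a * y) * (a * y) = a * y := by rw [← mul_assoc, mul_assoc a y a, hy1']
  have hxa : (x * a) * (x * a) = x * a := by rw [← mul_assoc, mul_assoc x a x, hx2']
  have hya : (y * a) * (y * a) = y * a := by rw [← mul_assoc, mul_assoc y a y, hy2']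
  -- x = x * (a * y)
  have key1 : x = x * (a * y) := by
    calc x = x * (a * x) := hx2'.symm
      _ = x * ((a * (y * a)) * x) := by rw [hy1']
      _ = x * ((a * y) * (a * x)) := by simp only [mul_assoc]
      _ = x * ((a * x) * (a * y)) := by rw [hic _ _ hay hax]
      _ = (x * (a * x)) * (a * y) := by simp only [mul_assoc]
      _ = x * (a * y) := by rw [hx2']
  -- y = x * (a * y)
  have key2 : y = x * (a * y) := by
    calc y = y * (a * y) := hy2'.symm
      _ = y * ((a * (x * a)) * y) := by rw [hx1']
      _ = ((y * a) * (x * a)) * y := by simp only [mul_assoc]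
      _ = ((x * a) * (y * a)) * y := by rw [hic _ _ hxa hya]
      _ = x * (a * (y * (a * y))) := by simp only [mul_assoc]
      _ = x * (a * y) := by rw [hy2']
  exact key1.trans key2.symm

section withInv
variable (i : S → S)

lemma refInv_exists (reg : ∀ a : S, ∃ x : S, a = a * x * a) (a : S) :
    ∃ x : S, refInv a x := by
  obtain ⟨x, hx⟩ := reg a
  have hx' : a * (x * a) = a := by rw [← mul_assoc]; exact hx.symm
  have hxP := fun z => pam hx' z  -- a * ((x*a) * z) = a * z
  refine ⟨x * a * x, ?_, ?_⟩
  · show a * (x * a * x) * a = a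
    calc a * (x * a * x) * a = a * ((x * a) * (x * a)) := by simp only [mul_assoc]
      _ = a * (x * a) := by rw [hxP]
      _ = a := hx'
  · show (x * a * x) * a * (x * a * x) = x * a * x
    calc (x * a * x) * a * (x * a * x) = x * (a * ((x * a) * ((x * a) * x))) := by
          simp only [mul_assoc]
      _ = x * (a * ((x * a) * x)) := by rw [hxP]
      _ = x * (a * (x * (a * x))) := by simp only [mul_assoc]
      _ = x * ((a * (x * a)) * x) := by simp only [mul_assoc]
      _ = x * (a * x) := by rw [hx']
      _ = x * a * x := by rw [mul_assoc]

lemma i_idem (hi : ∀ a : S, refInv a (i a))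
    (huniq : ∀ a x y : S, refInv a x → refInv a y → x = y)
    {e : S} (he : e * e = e) : i e = e :=
  huniq e (i e) e (hi e) ⟨by rw [he, he], by rw [he, he]⟩

lemma i_invol (hi : ∀ a : S, refInv a (i a))
    (huniq : ∀ a x y : S, refInv a x → refInv a y → x = y)
    (a : S) : i (i a) = a :=
  huniq (i a) (i (i a)) a (hi (i a)) ⟨(hi a).2, (hi a).1⟩

lemma i_mul (hi : ∀ a : S, refInv a (i a))
    (huniq : ∀ a x y : S, refInv a x → refInv a y → x = y)
    (hic : ∀ e f : S, e * e = e → f * f = f → e * f = f * e)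
    (a b : S) : i (a * b) = i b * i a := by
  have ha1' : a * (i a * a) = a := by rw [← mul_assoc]; exact (hi a).1
  have hb2' : i b * (b * i b) = i b := by rw [← mul_assoc]; exact (hi b).2
  have hp : (b * i b) * (b * i b) = b * i b := by
    calc (b * i b) * (b * i b) = b * (i b * b * i b) := by simp only [mul_assoc]
      _ = b * i b := by rw [(hi b).2]
  have hq : (i a * a) * (i a * a) = i a * a := by
    calc (i a * a) * (i a * a) = (i a * a * i a) * a := by simp only [mul_assoc]
      _ = i a * a := by rw [(hi a).2]
  have hpq := hic _ _ hp hq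
  refine huniq (a * b) _ _ (hi (a * b)) ⟨?_, ?_⟩
  · calc (a * b) * (i b * i a) * (a * b)
        = a * ((b * i b) * ((i a * a) * b)) := by simp only [mul_assoc]
      _ = a * ((i a * a) * ((b * i b) * b)) := by rw [comm_ext hpq b]
      _ = a * ((i a * a) * b) := by rw [(hi b).1]
      _ = a * (i a * a) * b := by simp only [mul_assoc]
      _ = a * b := by rw [ha1']
  · calc (i b * i a) * (a * b) * (i b * i a)
        = i b * ((i a * a) * ((b * i b) * i a)) := by simp only [mul_assoc]
      _ = i b * ((b * i b) * ((i a * a) * i a)) := by rw [← comm_ext hpq (i a)]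
      _ = i b * ((b * i b) * i a) := by rw [(hi a).2]
      _ = i b * (b * i b) * i a := by simp only [mul_assoc]
      _ = i b * i a := by rw [hb2']

lemma leL_char (hi : ∀ a : S, refInv a (i a)) {a b : S} (h : leL a b) :
    a * (i b * b) = a := by
  rcases h with rfl | ⟨x, rfl⟩
  · rw [← mul_assoc]; exact (hi _).1
  · calc x * b * (i b * b) = x * (b * i b * b) := by simp only [mul_assoc]
      _ = x * b := by rw [(hi b).1]

lemma leL_of {a b : S} (h : a * (i b * b) = a) : leL a b :=
  Or.inr ⟨a * i b, by rw [mul_assoc]; exact h.symm⟩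

lemma leR_char (hi : ∀ a : S, refInv a (i a)) {a b : S} (h : leR a b) :
    b * i b * a = a := by
  rcases h with rfl | ⟨y, rfl⟩
  · exact (hi _).1
  · exact pam (hi b).1 y

lemma leR_of {a b : S} (h : b * i b * a = a) : leR a b :=
  Or.inr ⟨i b * a, by rw [← mul_assoc]; exact h.symm⟩

lemma HF (hi : ∀ a : S, refInv a (i a))
    (hic : ∀ e f : S, e * e = e → f * f = f → e * f = f * e)
    {a b : S} (h : grH a b) : i a * a = i b * b := by
  have c1 := leL_char i hi h.1.1
  have c2 := leL_char i hi h.2.1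
  have hp : (i a * a) * (i a * a) = i a * a := by
    calc (i a * a) * (i a * a) = (i a * a * i a) * a := by simp only [mul_assoc]
      _ = i a * a := by rw [(hi a).2]
  have hq : (i b * b) * (i b * b) = i b * b := by
    calc (i b * b) * (i b * b) = (i b * b * i b) * b := by simp only [mul_assoc]
      _ = i b * b := by rw [(hi b).2]
  have h1 : (i a * a) * (i b * b) = i a * a := by
    calc (i a * a) * (i b * b) = i a * (a * (i b * b)) := by simp only [mul_assoc]
      _ = i a * a := by rw [c1]
  have h2 : (i b * b) * (i a * a) = i b * b := by
    calc (i b * b) * (i a * a) = i b * (b * (i a * a)) := by simp only [mul_assoc]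
      _ = i b * b := by rw [c2]
  calc i a * a = (i a * a) * (i b * b) := h1.symm
    _ = (i b * b) * (i a * a) := hic _ _ hp hq
    _ = i b * b := h2

lemma HG (hi : ∀ a : S, refInv a (i a))
    (hic : ∀ e f : S, e * e = e → f * f = f → e * f = f * e)
    {a b : S} (h : grH a b) : a * i a = b * i b := by
  have c1 := leR_char i hi h.1.2
  have c2 := leR_char i hi h.2.2
  have hp : (a * i a) * (a * i a) = a * i a := by
    calc (a * i a) * (a * i a) = a * (i a * a * i a) := by simp only [mul_assoc]
      _ = a * i a := by rw [(hi a).2]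
  have hq : (b * i b) * (b * i b) = b * i b := by
    calc (b * i b) * (b * i b) = b * (i b * b * i b) := by simp only [mul_assoc]
      _ = b * i b := by rw [(hi b).2]
  have h1 : (b * i b) * (a * i a) = a * i a := by
    calc (b * i b) * (a * i a) = (b * i b * a) * i a := by simp only [mul_assoc]
      _ = a * i a := by rw [c1]
  have h2 : (a * i a) * (b * i b) = b * i b := by
    calc (a * i a) * (b * i b) = (a * i a * b) * i b := by simp only [mul_assoc]
      _ = b * i b := by rw [c2]
  calc a * i a = (b * i b) * (a * i a) := h1.symm
    _ = (a * i a) * (b * i b) := hic _ _ hq hp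
    _ = b * i b := h2

lemma conj (hi : ∀ a : S, refInv a (i a))
    (huniq : ∀ a x y : S, refInv a x → refInv a y → x = y)
    (hic : ∀ e f : S, e * e = e → f * f = f → e * f = f * e)
    (hcomm : ∀ a b : S, GrpInvertible a → GrpInvertible b → grH (a * b) (b * a))
    {a b : S} (h : grH a b) {e : S} (he : e * e = e) :
    i a * (e * a) = i b * (e * b) := by
  have hf : i a * a = i b * b := HF i hi hic h
  have hg2 : b * i b = a * i a := (HG i hi hic h).symm
  have ha1' : a * (i a * a) = a := by rw [← mul_assoc]; exact (hi a).1
  have ha1P := fun z => pam (hi a).1 z  -- (a * i a) * (a * z) = a * z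
  have hb1P := fun z => pam (hi b).1 z  -- (b * i b) * (b * z) = b * z
  have ha2P := fun z => pam (hi a).2 z  -- (i a * a) * (i a * z) = i a * z
  have hb2P := fun z => pam (hi b).2 z  -- (i b * b) * (i b * z) = i b * z
  have heP := fun z => pam he z        -- e * (e * z) = e * z
  have hfP : ∀ z, i b * (b * z) = i a * (a * z) := fun z => by
    rw [pam hf.symm z, mul_assoc]
  have hgidem : (a * i a) * (a * i a) = a * i a := ha1P (i a)
  -- t = a * i b, t' = b * i a
  have htt' : (a * i b) * (b * i a) = a * i a := by
    calc (a * i b) * (b * i a) = a * (i b * (b * i a)) := by simp only [mul_assoc]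
      _ = a * (i a * (a * i a)) := by rw [hfP]
      _ = (a * i a) * (a * i a) := by simp only [mul_assoc]
      _ = a * i a := hgidem
  have ht't : (b * i a) * (a * i b) = a * i a := by
    calc (b * i a) * (a * i b) = b * ((i a * a) * i b) := by simp only [mul_assoc]
      _ = b * ((i b * b) * i b) := by rw [hf]
      _ = b * (i b * b * i b) := rfl
      _ = b * i b := by rw [(hi b).2]
      _ = a * i a := hg2
  have tt't : (a * i b) * (b * i a) * (a * i b) = a * i b := by
    rw [htt']; exact ha1P (i b)
  have t'tt' : (b * i a) * (a * i b) * (b * i a) = b * i a := by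
    rw [ht't, ← hg2]; exact hb1P (i a)
  have hgt : GrpInvertible (a * i b) := ⟨b * i a, htt'.trans ht't.symm, tt't, t'tt'⟩
  have hge : GrpInvertible e := ⟨e, rfl, by rw [he, he], by rw [he, he]⟩
  have hit : i (a * i b) = b * i a :=
    huniq (a * i b) _ _ (hi (a * i b)) ⟨tt't, t'tt'⟩
  have hie : i e = e := i_idem i hi huniq he
  have hH := hcomm (a * i b) e hgt hge
  have hge' : (a * i a) * e = e * (a * i a) := (hic e _ he hgidem).symm
  have hgeP := fun z => comm_ext hge' z  -- (a*ia) * (e * z) = e * ((a*ia) * z)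
  have hgt'' : (a * i a) * (b * i a) = b * i a := by rw [← ht't]; exact t'tt'
  have hgtt : (a * i a) * (a * i b) = a * i b := ha1P (i b)
  -- A2' : e * (t * e) = t * e
  have iet : i (e * (a * i b)) = (b * i a) * e := by
    rw [i_mul i hi huniq hic, hit, hie]
  have ite : i ((a * i b) * e) = e * (b * i a) := by
    rw [i_mul i hi huniq hic, hit, hie]
  have A2 := leR_char i hi hH.1.2
  rw [iet] at A2
  -- A2 : (e * (a*ib)) * ((b*ia) * e) * ((a*ib) * e) = (a*ib) * e
  have A2' : e * ((a * i b) * e) = (a * i b) * e := by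
    have expand : (e * (a * i b)) * ((b * i a) * e) * ((a * i b) * e)
        = e * ((a * i b) * e) := by
      calc (e * (a * i b)) * ((b * i a) * e) * ((a * i b) * e)
          = e * ((a * i b) * (b * i a) * (e * ((a * i b) * e))) := by
            simp only [mul_assoc]
        _ = e * ((a * i a) * (e * ((a * i b) * e))) := by rw [htt']
        _ = e * (e * ((a * i a) * ((a * i b) * e))) := by rw [hgeP]
        _ = e * ((a * i a) * ((a * i b) * e)) := heP _
        _ = e * ((a * i a) * (a * i b) * e) := by simp only [mul_assoc]
        _ = e * ((a * i b) * e) := by rw [hgtt]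
    rw [← expand]; exact A2
  -- A1' : e * ((a*ib) * ((a*ia) * e)) = e * (a*ib)
  have A1 := leL_char i hi hH.2.1
  rw [ite] at A1
  -- A1 : (e * (a*ib)) * ((e * (b*ia)) * ((a*ib) * e)) = e * (a*ib)
  have A1' : e * ((a * i b) * ((a * i a) * e)) = e * (a * i b) := by
    have expand : (e * (a * i b)) * ((e * (b * i a)) * ((a * i b) * e))
        = e * ((a * i b) * ((a * i a) * e)) := by
      calc (e * (a * i b)) * ((e * (b * i a)) * ((a * i b) * e))
          = e * ((a * i b) * (e * ((b * i a) * (a * i b) * e))) := by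
            simp only [mul_assoc]
        _ = e * ((a * i b) * (e * ((a * i a) * e))) := by rw [ht't]
        _ = e * ((a * i b) * ((a * i a) * (e * e))) := by rw [hgeP]
        _ = e * ((a * i b) * ((a * i a) * e)) := by rw [he]
    rw [← expand]; exact A1
  -- (1n) : e * ((a*ib) * (e * (b*ia))) = e * (a*ia)
  have h1n : e * ((a * i b) * (e * (b * i a))) = e * (a * i a) := by
    have gt' : (a * i a) * (e * (b * i a)) = e * (b * i a) := by
      rw [hgeP, hgt'']
    calc e * ((a * i b) * (e * (b * i a)))
        = e * ((a * i b) * ((a * i a) * (e * (b * i a)))) := by rw [gt']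
      _ = e * ((a * i b) * ((a * i a) * e) * (b * i a)) := by simp only [mul_assoc]
      _ = (e * ((a * i b) * ((a * i a) * e))) * (b * i a) := by simp only [mul_assoc]
      _ = (e * (a * i b)) * (b * i a) := by rw [A1']
      _ = e * ((a * i b) * (b * i a)) := by simp only [mul_assoc]
      _ = e * (a * i a) := by rw [htt']
  -- (3n) : (b*ia) * (e * ((a*ib) * e)) = (a*ia) * e
  have h3n : (b * i a) * (e * ((a * i b) * e)) = (a * i a) * e := by
    calc (b * i a) * (e * ((a * i b) * e))
        = (b * i a) * ((a * i b) * e) := by rw [A2']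
      _ = (b * i a) * (a * i b) * e := by simp only [mul_assoc]
      _ = (a * i a) * e := by rw [ht't]
  -- hX : (b*ia) * (e * (a*ia)) = (a*ia) * (e * (b*ia))
  have hX : (b * i a) * (e * (a * i a)) = (a * i a) * (e * (b * i a)) := by
    calc (b * i a) * (e * (a * i a))
        = (b * i a) * (e * ((a * i b) * (e * (b * i a)))) := by
          rw [← h1n]
      _ = (b * i a) * (e * ((a * i b) * e) * (b * i a)) := by simp only [mul_assoc]
      _ = ((b * i a) * (e * ((a * i b) * e))) * (b * i a) := by simp only [mul_assoc]
      _ = ((a * i a) * e) * (b * i a) := by rw [h3n]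
      _ = (a * i a) * (e * (b * i a)) := by simp only [mul_assoc]
  -- key : (b*ia) * (e * (a*ib)) = (a*ia) * e
  have key : (b * i a) * (e * (a * i b)) = (a * i a) * e := by
    calc (b * i a) * (e * (a * i b))
        = (b * i a) * (e * ((a * i a) * (a * i b))) := by rw [hgtt]
      _ = (b * i a) * (e * (a * i a)) * (a * i b) := by simp only [mul_assoc]
      _ = (a * i a) * (e * (b * i a)) * (a * i b) := by rw [hX]
      _ = (a * i a) * (e * ((b * i a) * (a * i b))) := by simp only [mul_assoc]
      _ = (a * i a) * (e * (a * i a)) := by rw [ht't]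
      _ = e * ((a * i a) * (a * i a)) := by rw [hgeP]
      _ = e * (a * i a) := by rw [hgidem]
      _ = (a * i a) * e := hge'.symm
  -- final
  have left : i b * (b * (i a * (e * (a * (i b * b))))) = i a * (e * a) := by
    calc i b * (b * (i a * (e * (a * (i b * b)))))
        = i b * (b * (i a * (e * (a * (i a * a))))) := by rw [← hf]
      _ = i b * (b * (i a * (e * a))) := by rw [ha1']
      _ = i a * (a * (i a * (e * a))) := hfP _
      _ = i a * a * (i a * (e * a)) := (mul_assoc ..).symm
      _ = i a * (e * a) := ha2P _
  rw [← left]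
  calc i b * (b * (i a * (e * (a * (i b * b)))))
      = i b * ((b * i a) * (e * ((a * i b) * b))) := by simp only [mul_assoc]
    _ = i b * ((b * i a) * (e * (a * i b)) * b) := by simp only [mul_assoc]
    _ = i b * ((a * i a) * e * b) := by rw [key]
    _ = i b * ((a * i a) * (e * b)) := by simp only [mul_assoc]
    _ = i b * ((b * i b) * (e * b)) := by rw [hg2]
    _ = (i b * b) * (i b * (e * b)) := by simp only [mul_assoc]
    _ = i b * (e * b) := hb2P (e * b)

lemma inv_leH (hi : ∀ a : S, refInv a (i a))
    (huniq : ∀ a x y : S, refInv a x → refInv a y → x = y)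
    (hic : ∀ e f : S, e * e = e → f * f = f → e * f = f * e)
    {a b : S} (h : grH a b) : leH (i a) (i b) := by
  have hf := HF i hi hic h
  have hg := HG i hi hic h
  constructor
  · apply leL_of i
    rw [i_invol i hi huniq b, ← hg, ← mul_assoc]
    exact (hi a).2
  · apply leR_of i
    rw [i_invol i hi huniq b, ← hf]
    exact (hi a).2

lemma inv_H (hi : ∀ a : S, refInv a (i a))
    (huniq : ∀ a x y : S, refInv a x → refInv a y → x = y)
    (hic : ∀ e f : S, e * e = e → f * f = f → e * f = f * e)
    {a b : S} (h : grH a b) : grH (i a) (i b) :=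
  ⟨inv_leH i hi huniq hic h, inv_leH i hi huniq hic (grH_symm h)⟩

lemma congL (hi : ∀ a : S, refInv a (i a))
    (huniq : ∀ a x y : S, refInv a x → refInv a y → x = y)
    (hic : ∀ e f : S, e * e = e → f * f = f → e * f = f * e)
    (hcomm : ∀ a b : S, GrpInvertible a → GrpInvertible b → grH (a * b) (b * a))
    {a b : S} (h : grH a b) (c : S) : leL (c * a) (c * b) := by
  apply leL_of i
  rw [i_mul i hi huniq hic]
  have he : (i c * c) * (i c * c) = i c * c := by
    calc (i c * c) * (i c * c) = (i c * c * i c) * c := by simp only [mul_assoc]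
      _ = i c * c := by rw [(hi c).2]
  have hp : (a * i a) * (a * i a) = a * i a := by
    calc (a * i a) * (a * i a) = a * (i a * a * i a) := by simp only [mul_assoc]
      _ = a * i a := by rw [(hi a).2]
  have hpq : (a * i a) * (i c * c) = (i c * c) * (a * i a) := hic _ _ hp he
  calc (c * a) * ((i b * i c) * (c * b))
      = c * (a * (i b * ((i c * c) * b))) := by simp only [mul_assoc]
    _ = c * (a * (i a * ((i c * c) * a))) := by
        rw [← conj i hi huniq hic hcomm h he]
    _ = c * ((a * i a) * ((i c * c) * a)) := by simp only [mul_assoc]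
    _ = c * ((i c * c) * ((a * i a) * a)) := by rw [comm_ext hpq a]
    _ = c * ((i c * c) * a) := by rw [(hi a).1]
    _ = c * i c * c * a := by simp only [mul_assoc]
    _ = c * a := by rw [(hi c).1]

lemma congR (hi : ∀ a : S, refInv a (i a))
    (huniq : ∀ a x y : S, refInv a x → refInv a y → x = y)
    (hic : ∀ e f : S, e * e = e → f * f = f → e * f = f * e)
    (hcomm : ∀ a b : S, GrpInvertible a → GrpInvertible b → grH (a * b) (b * a))
    {a b : S} (h : grH a b) (c : S) : leR (a * c) (b * c) := by
  apply leR_of i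
  rw [i_mul i hi huniq hic]
  have he : (c * i c) * (c * i c) = c * i c := by
    calc (c * i c) * (c * i c) = c * (i c * c * i c) := by simp only [mul_assoc]
      _ = c * i c := by rw [(hi c).2]
  have hp : (i a * a) * (i a * a) = i a * a := by
    calc (i a * a) * (i a * a) = (i a * a * i a) * a := by simp only [mul_assoc]
      _ = i a * a := by rw [(hi a).2]
  have hqp : (c * i c) * (i a * a) = (i a * a) * (c * i c) := hic _ _ he hp
  have B : a * ((c * i c) * i a) = b * ((c * i c) * i b) := by
    have := conj i hi huniq hic hcomm (inv_H i hi huniq hic h) he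
    rwa [i_invol i hi huniq a, i_invol i hi huniq b] at this
  have ha1' : a * (i a * a) = a := by rw [← mul_assoc]; exact (hi a).1
  calc (b * c) * (i c * i b) * (a * c)
      = (b * ((c * i c) * i b)) * (a * c) := by simp only [mul_assoc]
    _ = (a * ((c * i c) * i a)) * (a * c) := by rw [← B]
    _ = a * ((c * i c) * ((i a * a) * c)) := by simp only [mul_assoc]
    _ = a * ((i a * a) * ((c * i c) * c)) := by rw [comm_ext hqp c]
    _ = a * ((i a * a) * (c * i c * c)) := rfl
    _ = a * ((i a * a) * c) := by rw [(hi c).1]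
    _ = (a * (i a * a)) * c := by simp only [mul_assoc]
    _ = a * c := by rw [ha1']

end withInv

lemma prod_idem (reg : ∀ a : S, ∃ x : S, a = a * x * a)
    (huniq : ∀ a x y : S, refInv a x → refInv a y → x = y)
    {e f : S} (he : e * e = e) (hf : f * f = f) : (e * f) * (e * f) = e * f := by
  obtain ⟨x, hx⟩ := refInv_exists reg (e * f)
  have heP := fun z => pam he z
  have hfP := fun z => pam hf z
  have hg_idem : (f * x * e) * (f * x * e) = f * x * e := by
    calc (f * x * e) * (f * x * e)
        = f * (x * (e * f) * x * e) := by simp only [mul_assoc]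
      _ = f * (x * e) := by rw [hx.2]
      _ = f * x * e := (mul_assoc ..).symm
  have h2 : (e * f) * (f * x * e) * (e * f) = e * f := by
    calc (e * f) * (f * x * e) * (e * f)
        = e * (f * (f * (x * (e * (e * f))))) := by simp only [mul_assoc]
      _ = e * (f * (x * (e * (e * f)))) := by rw [hfP]
      _ = e * (f * (x * (e * f))) := by rw [heP]
      _ = e * f * x * (e * f) := by simp only [mul_assoc]
      _ = e * f := hx.1
  have h1 : (f * x * e) * (e * f) * (f * x * e) = f * x * e := by
    calc (f * x * e) * (e * f) * (f * x * e)
        = f * (x * (e * (e * (f * (f * (x * e)))))) := by simp only [mul_assoc]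
      _ = f * (x * (e * (f * (f * (x * e))))) := by rw [heP]
      _ = f * (x * (e * (f * (x * e)))) := by rw [hfP]
      _ = f * x * e * (f * x * e) := by simp only [mul_assoc]
      _ = f * x * e := hg_idem
  have hgef : f * x * e = e * f :=
    huniq (f * x * e) (f * x * e) (e * f)
      ⟨by rw [hg_idem, hg_idem], by rw [hg_idem, hg_idem]⟩ ⟨h1, h2⟩
  rw [hgef] at hg_idem
  exact hg_idem

lemma idem_comm' (reg : ∀ a : S, ∃ x : S, a = a * x * a)
    (huniq : ∀ a x y : S, refInv a x → refInv a y → x = y)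
    {e f : S} (he : e * e = e) (hf : f * f = f) : e * f = f * e := by
  have hef := prod_idem reg huniq he hf
  have hfe := prod_idem reg huniq hf he
  have heP := fun z => pam he z
  have hfP := fun z => pam hf z
  refine huniq (e * f) (e * f) (f * e)
    ⟨by rw [hef, hef], by rw [hef, hef]⟩ ⟨?_, ?_⟩
  · calc (e * f) * (f * e) * (e * f)
        = e * (f * (f * (e * (e * f)))) := by simp only [mul_assoc]
      _ = e * (f * (e * (e * f))) := by rw [hfP]
      _ = e * (f * (e * f)) := by rw [heP]
      _ = e * f * (e * f) := by simp only [mul_assoc]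
      _ = e * f := hef
  · calc (f * e) * (e * f) * (f * e)
        = f * (e * (e * (f * (f * e)))) := by simp only [mul_assoc]
      _ = f * (e * (f * (f * e))) := by rw [heP]
      _ = f * (e * (f * e)) := by rw [hfP]
      _ = f * e * (f * e) := by simp only [mul_assoc]
      _ = f * e := hfe

lemma backward (reg : ∀ a : S, ∃ x : S, a = a * x * a)
    (huniq : ∀ a x y : S, refInv a x → refInv a y → x = y)
    (hcong : ∀ a b c : S, grH a b → grH (c * a) (c * b) ∧ grH (a * c) (b * c))
    (a b : S) (hga : GrpInvertible a) (hgb : GrpInvertible b) :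
    grH (a * b) (b * a) := by
  obtain ⟨a', ha⟩ := hga
  obtain ⟨b', hb⟩ := hgb
  have he : (a * a') * (a * a') = a * a' := by
    calc (a * a') * (a * a') = (a * a' * a) * a' := by simp only [mul_assoc]
      _ = a * a' := by rw [ha.2.1]
  have hf : (b * b') * (b * b') = b * b' := by
    calc (b * b') * (b * b') = (b * b' * b) * b' := by simp only [mul_assoc]
      _ = b * b' := by rw [hb.2.1]
  have hae : grH a (a * a') := by
    refine ⟨⟨Or.inr ⟨a, ?_⟩, Or.inr ⟨a, ha.2.1.symm⟩⟩,
      ⟨Or.inr ⟨a', by rw [ha.1]⟩, Or.inr ⟨a', rfl⟩⟩⟩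
    rw [ha.1, ← mul_assoc, ha.2.1]
  have hbf : grH b (b * b') := by
    refine ⟨⟨Or.inr ⟨b, ?_⟩, Or.inr ⟨b, hb.2.1.symm⟩⟩,
      ⟨Or.inr ⟨b', by rw [hb.1]⟩, Or.inr ⟨b', rfl⟩⟩⟩
    rw [hb.1, ← mul_assoc, hb.2.1]
  have hef := idem_comm' reg huniq he hf
  have c1 : grH (a * b) ((a * a') * b) := (hcong a (a * a') b hae).2
  have c2 : grH ((a * a') * b) ((a * a') * (b * b')) := (hcong b (b * b') (a * a') hbf).1
  have c3 : grH (b * a) ((b * b') * a) := (hcong b (b * b') a hbf).2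
  have c4 : grH ((b * b') * a) ((b * b') * (a * a')) := (hcong a (a * a') (b * b') hae).1
  have h5 : grH (b * a) ((a * a') * (b * b')) := by
    rw [hef]
    exact grH_trans c3 c4
  exact grH_trans (grH_trans c1 c2) (grH_symm h5)


theorem stmt18 :
    ((∀ a : S, ∃ x : S, a = a * x * a) ∧
      (∀ a b : S, GrpInvertible a → GrpInvertible b → grH (a * b) (b * a))) ↔
    (((∀ a : S, ∃ x : S, a = a * x * a) ∧
        (∀ a x y : S, refInv a x → refInv a y → x = y)) ∧
      (∀ a b c : S, grH a b → grH (c * a) (c * b) ∧ grH (a * c) (b * c))) := by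
  constructor
  · rintro ⟨reg, hcomm⟩
    have hic : ∀ e f : S, e * e = e → f * f = f → e * f = f * e :=
      fun e f he hf => idem_comm hcomm he hf
    have huniq : ∀ a x y : S, refInv a x → refInv a y → x = y :=
      fun a x y hx hy => uniq_refInv hic a x y hx hy
    choose iv hiv using refInv_exists reg
    refine ⟨⟨reg, huniq⟩, fun a b c h => ?_⟩
    exact ⟨⟨⟨congL iv hiv huniq hic hcomm h c, leR_mull c h.1.2⟩,
            ⟨congL iv hiv huniq hic hcomm (grH_symm h) c, leR_mull c h.2.2⟩⟩,
           ⟨⟨leL_mulr c h.1.1, congR iv hiv huniq hic hcomm h c⟩,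
            ⟨leL_mulr c h.2.1, congR iv hiv huniq hic hcomm (grH_symm h) c⟩⟩⟩
  · rintro ⟨⟨reg, huniq⟩, hcong⟩
    exact ⟨reg, fun a b hga hgb => backward reg huniq hcong a b hga hgb⟩
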